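/- Let X be a presheaf on Set_s^f satisfying Condition (3), let x ∈ X n, and suppose there exist m ≥ 1, a surjection f : Fin n → Fin m and y ∈ X m with X f y = x and Fix(y) = 1. Then the set of pairs (g, z), where g : Fin n → Fin m is surjective, z ∈ X m, Fix(z) = 1 and X g z = x, has exactly m! elements. -/

import Mathlib

/-- A presheaf on `Set_s^f`: a family of sets `obj n` together with, for every surjection
`f : Fin m → Fin n`, a map `map f : obj n → obj m`, functorially. -/
structure SurjPresheaf where
  obj : ℕ → Type
  map : ∀ {m n : ℕ} (f : Fin m → Fin n), Function.Surjective f → obj n → obj m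
  map_id : ∀ n : ℕ, map (id : Fin n → Fin n) Function.surjective_id = id
  map_comp : ∀ {r m n : ℕ} (f : Fin r → Fin m) (hf : Function.Surjective f)
    (g : Fin m → Fin n) (hg : Function.Surjective g),
    map (g ∘ f) (hg.comp hf) = map f hf ∘ map g hg

/-- `Fix(x) = 1`: the identity is the only permutation `σ` of `Fin n` with `X σ x = x`. -/
def SurjPresheaf.FixTrivial (X : SurjPresheaf) {n : ℕ} (x : X.obj n) : Prop :=
  ∀ σ : Equiv.Perm (Fin n), X.map ⇑σ σ.surjective x = x → σ = 1

/-- Condition (2): every element is the restriction of an element with trivial fixator. -/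
def SurjPresheaf.Cond2 (X : SurjPresheaf) : Prop :=
  ∀ (n : ℕ), 1 ≤ n → ∀ x : X.obj n,
    ∃ (m : ℕ) (_ : 1 ≤ m) (f : Fin n → Fin m) (hf : Function.Surjective f) (y : X.obj m),
      X.map f hf y = x ∧ X.FixTrivial y

/-- Condition (3): elements with trivial fixator having a common restriction differ
by a bijection. -/
def SurjPresheaf.Cond3 (X : SurjPresheaf) : Prop :=
  ∀ (k n m : ℕ), 1 ≤ k → ∀ (f : Fin k → Fin n) (hf : Function.Surjective f)
    (g : Fin k → Fin m) (hg : Function.Surjective g) (x : X.obj n) (y : X.obj m),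
    X.map f hf x = X.map g hg y → X.FixTrivial x → X.FixTrivial y →
    n = m ∧ ∃ σ : Fin n ≃ Fin m, ⇑σ ∘ f = g ∧ X.map ⇑σ σ.surjective y = x


lemma SurjPresheaf.map_map (X : SurjPresheaf) {r m n : ℕ} (f : Fin r → Fin m)
    (hf : Function.Surjective f) (g : Fin m → Fin n) (hg : Function.Surjective g)
    (v : X.obj n) : X.map f hf (X.map g hg v) = X.map (g ∘ f) (hg.comp hf) v := by
  rw [X.map_comp]; rfl

lemma SurjPresheaf.map_congr (X : SurjPresheaf) {m n : ℕ} {f g : Fin m → Fin n}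
    (hf : Function.Surjective f) (hg : Function.Surjective g) (v : X.obj n)
    (h : f = g) : X.map f hf v = X.map g hg v := by subst h; rfl

lemma SurjPresheaf.map_inv_map (X : SurjPresheaf) {m : ℕ} (σ : Equiv.Perm (Fin m))
    (v : X.obj m) : X.map ⇑σ⁻¹ σ⁻¹.surjective (X.map ⇑σ σ.surjective v) = v := by
  rw [X.map_map]
  have : (⇑σ ∘ ⇑σ⁻¹ : Fin m → Fin m) = id := by
    funext i; simp
  rw [X.map_congr _ Function.surjective_id v this, X.map_id]
  rfl

lemma SurjPresheaf.map_map_inv (X : SurjPresheaf) {m : ℕ} (σ : Equiv.Perm (Fin m))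
    (v : X.obj m) : X.map ⇑σ σ.surjective (X.map ⇑σ⁻¹ σ⁻¹.surjective v) = v := by
  rw [X.map_map]
  have : (⇑σ⁻¹ ∘ ⇑σ : Fin m → Fin m) = id := by
    funext i; simp
  rw [X.map_congr _ Function.surjective_id v this, X.map_id]
  rfl

/-- Let `X` be a presheaf on `Set_s^f` satisfying Condition (3), let
`x ∈ X n`, and suppose there are `m ≥ 1`, a surjection `f : Fin n → Fin m` and `y ∈ X m`
with `X f y = x` and `Fix(y) = 1`. Then the set of pairs `(g, z)` with `g : Fin n → Fin m`
surjective, `z ∈ X m`, `Fix(z) = 1` and `X g z = x` has exactly `m!` elements. -/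
theorem SurjPresheaf.card_presentations_eq_factorial (X : SurjPresheaf) (h3 : X.Cond3)
    {n m : ℕ} (hn : 1 ≤ n) (hm : 1 ≤ m) (x : X.obj n)
    (f : Fin n → Fin m) (hf : Function.Surjective f) (y : X.obj m)
    (hy : X.FixTrivial y) (hfy : X.map f hf y = x) :
    Nat.card {p : (Fin n → Fin m) × X.obj m //
      ∃ h : Function.Surjective p.1, X.FixTrivial p.2 ∧ X.map p.1 h p.2 = x} =
      Nat.factorial m := by
  classical
  subst hfy
  have hbij : Function.Bijective (fun σ : Equiv.Perm (Fin m) =>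
      (⟨(⇑σ ∘ f, X.map ⇑σ⁻¹ σ⁻¹.surjective y),
        σ.surjective.comp hf, by
          intro τ hτ
          have hτ' : X.map ⇑τ τ.surjective (X.map ⇑σ⁻¹ σ⁻¹.surjective y)
              = X.map ⇑σ⁻¹ σ⁻¹.surjective y := hτ
          have hkey : X.map ⇑(σ⁻¹ * τ * σ) (σ⁻¹ * τ * σ).surjective y = y := by
            have h1 : (⇑σ ∘ ⇑(σ⁻¹ * τ * σ) : Fin m → Fin m) = ⇑τ ∘ ⇑σ := by
              funext i; simp [Equiv.Perm.mul_apply]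
            calc X.map ⇑(σ⁻¹ * τ * σ) (σ⁻¹ * τ * σ).surjective y
                = X.map ⇑(σ⁻¹ * τ * σ) (σ⁻¹ * τ * σ).surjective
                    (X.map ⇑σ σ.surjective (X.map ⇑σ⁻¹ σ⁻¹.surjective y)) := by
                  rw [X.map_map_inv]
              _ = X.map (⇑σ ∘ ⇑(σ⁻¹ * τ * σ))
                    (σ.surjective.comp (σ⁻¹ * τ * σ).surjective)
                    (X.map ⇑σ⁻¹ σ⁻¹.surjective y) := X.map_map _ _ _ _ _
              _ = X.map (⇑τ ∘ ⇑σ) (τ.surjective.comp σ.surjective)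
                    (X.map ⇑σ⁻¹ σ⁻¹.surjective y) := X.map_congr _ _ _ h1
              _ = X.map ⇑σ σ.surjective (X.map ⇑τ τ.surjective
                    (X.map ⇑σ⁻¹ σ⁻¹.surjective y)) := (X.map_map _ _ _ _ _).symm
              _ = y := by rw [hτ', X.map_map_inv]
          have h0 := hy _ hkey
          have : τ = σ * 1 * σ⁻¹ := by rw [← h0]; group
          simpa using this,
        by rw [← X.map_map (hg := σ.surjective), X.map_map_inv]⟩ :
      {p : (Fin n → Fin m) × X.obj m //
        ∃ h : Function.Surjective p.1, X.FixTrivial p.2 ∧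
          X.map p.1 h p.2 = X.map f hf y})) := by
    constructor
    · intro σ σ' hσ
      have h1 : (⇑σ ∘ f : Fin n → Fin m) = ⇑σ' ∘ f := congrArg (Prod.fst ∘ Subtype.val) hσ
      ext i
      obtain ⟨j, rfl⟩ := hf i
      exact congrArg Fin.val (congrFun h1 j)
    · rintro ⟨⟨g, z⟩, hg, hz, hgz⟩
      obtain ⟨-, σ, hσf, hσz⟩ := h3 n m m hn f hf g hg y z hgz.symm hy hz
      refine ⟨σ, Subtype.ext (Prod.ext hσf ?_)⟩
      dsimp only
      rw [← hσz, X.map_inv_map]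
  rw [Nat.card_congr (Equiv.ofBijective _ hbij).symm, Nat.card_eq_fintype_card,
    Fintype.card_perm, Fintype.card_fin]
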